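/- For a prime p, the intersection graph of D_{2p^2} is a split graph: its vertex set partitions into an independent set (the p^2 reflection subgroups) and a set inducing a complete graph (the p dihedral subgroups of order 2p together with ⟨r⟩ and ⟨r^p⟩). -/

import Mathlib

open DihedralGroup Subgroup

/-- The intersection graph of a group: vertices are the proper non-trivial
subgroups, two distinct subgroups are adjacent iff their intersection is
non-trivial. -/
def interGraph (G : Type*) [Group G] :
    SimpleGraph {H : Subgroup G // H ≠ ⊥ ∧ H ≠ ⊤} where
  Adj H K := H ≠ K ∧ H.1 ⊓ K.1 ≠ ⊥
  symm := ⟨fun H K h => ⟨h.1.symm, by rw [inf_comm]; exact h.2⟩⟩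
  loopless := ⟨fun H h => h.1 rfl⟩

/-- The vertex type of the intersection graph of `DihedralGroup n`. -/
abbrev Vert (n : ℕ) := {H : Subgroup (DihedralGroup n) // H ≠ ⊥ ∧ H ≠ ⊤}

/-- The degree of a vertex in the intersection graph of `DihedralGroup n`. -/
noncomputable def deg (n : ℕ) (v : Vert n) : ℕ :=
  Nat.card ((interGraph (DihedralGroup n)).neighborSet v)

/-- The eccentricity of a vertex in the intersection graph of `DihedralGroup n`. -/
noncomputable def ecc (n : ℕ) (v : Vert n) : ℕ :=
  sSup (Set.range fun u => (interGraph (DihedralGroup n)).dist v u)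


section Aux
variable {n : ℕ}

theorem mem_zpowers_sr {j : ZMod n} {x : DihedralGroup n} :
    x ∈ zpowers (sr j) ↔ x = 1 ∨ x = sr j := by
  constructor
  · rintro ⟨k, rfl⟩
    have h2 : (sr j : DihedralGroup n) ^ (2 : ℤ) = 1 := by
      rw [zpow_two, sr_mul_self]
    have : (sr j : DihedralGroup n) ^ k = (sr j) ^ (k % 2) := by
      conv_lhs => rw [← Int.mul_ediv_add_emod k 2, zpow_add, zpow_mul, h2, one_zpow, one_mul]
    show sr j ^ k = 1 ∨ sr j ^ k = sr j
    rcases Int.emod_two_eq k with h | h <;> rw [this, h]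
    · exact Or.inl (zpow_zero _)
    · exact Or.inr (zpow_one _)
  · rintro (rfl | rfl)
    · exact one_mem _
    · exact mem_zpowers _

end Aux


theorem my_r_zpow {n : ℕ} (a : ZMod n) (k : ℤ) : (r a : DihedralGroup n) ^ k = r (k • a) := by
  induction k using Int.induction_on with
  | zero => simp
  | succ k ih => rw [zpow_add_one, ih, r_mul_r]; congr 1; simp [add_smul]
  | pred k ih =>
      rw [zpow_sub_one, ih]
      have : (r a : DihedralGroup n)⁻¹ = r (-a) := rfl
      rw [this, r_mul_r]; congr 1; simp [sub_smul]; abel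

theorem zmod_sq_classify (p : ℕ) (hp : p.Prime) (S : AddSubgroup (ZMod (p ^ 2))) :
    S = ⊥ ∨ S = AddSubgroup.zmultiples ((p : ℕ) : ZMod (p ^ 2)) ∨ S = ⊤ := by
  haveI : NeZero (p ^ 2) := ⟨pow_ne_zero 2 hp.pos.ne'⟩
  have hcard : Nat.card S ∣ p ^ 2 := by
    simpa [Nat.card_zmod] using AddSubgroup.card_addSubgroup_dvd_card S
  obtain ⟨i, hi, hSc⟩ := (Nat.dvd_prime_pow hp).mp hcard
  interval_cases i
  · left
    exact AddSubgroup.card_eq_one.mp (by simpa using hSc)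
  · right; left
    have hle : S ≤ AddSubgroup.zmultiples ((p : ℕ) : ZMod (p ^ 2)) := by
      intro x hx
      have h0 : (Nat.card S) • (⟨x, hx⟩ : S) = 0 := card_nsmul_eq_zero'
      have h1 : p • x = 0 := by
        have := congrArg (Subtype.val) h0
        simpa [hSc] using this
      have h2 : ((p * x.val : ℕ) : ZMod (p ^ 2)) = 0 := by
        push_cast
        rw [ZMod.natCast_val, ZMod.cast_id]
        simpa [nsmul_eq_mul] using h1
      have h3 : p ^ 2 ∣ p * x.val := (ZMod.natCast_eq_zero_iff _ _).mp h2
      have h4 : p ∣ x.val := by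
        rcases h3 with ⟨c, hc⟩
        have hc' : p * x.val = p * (p * c) := by rw [hc]; ring
        exact ⟨c, Nat.eq_of_mul_eq_mul_left hp.pos hc'⟩
      rcases h4 with ⟨c, hc⟩
      refine ⟨(c : ℤ), ?_⟩
      show (c : ℤ) • ((p : ℕ) : ZMod (p ^ 2)) = x
      have hx2 : x = ((p * c : ℕ) : ZMod (p ^ 2)) := by
        rw [← hc, ZMod.natCast_val, ZMod.cast_id]
      rw [zsmul_eq_mul, hx2]
      push_cast
      ring
    have hord : addOrderOf ((p : ℕ) : ZMod (p ^ 2)) = p := by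
      rw [ZMod.addOrderOf_coe _ (NeZero.ne _)]
      have hg : (p ^ 2).gcd p = p := by
        rw [pow_two]
        simpa using Nat.gcd_mul_left p p 1

      rw [hg, pow_two, Nat.mul_div_cancel_left p hp.pos]
    have hcz : Nat.card (AddSubgroup.zmultiples ((p : ℕ) : ZMod (p ^ 2))) = p := by
      rw [Nat.card_zmultiples, hord]
    exact AddSubgroup.eq_of_le_of_card_ge hle (by rw [hcz, hSc, pow_one])
  · right; right
    exact AddSubgroup.eq_top_of_card_eq _ (by rw [hSc, Nat.card_zmod])


/-- the rotation part of a subgroup of a dihedral group -/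
def rotPart {n : ℕ} (H : Subgroup (DihedralGroup n)) : AddSubgroup (ZMod n) where
  carrier := {i | r i ∈ H}
  zero_mem' := H.one_mem
  add_mem' := by
    intro a b ha hb
    have := H.mul_mem ha hb
    simpa [r_mul_r] using this
  neg_mem' := by
    intro a ha
    have := H.inv_mem ha
    have h : (r a : DihedralGroup n)⁻¹ = r (-a) := rfl
    rwa [h] at this

theorem dihedral_classify (p : ℕ) (hp : p.Prime) (H : Subgroup (DihedralGroup (p ^ 2)))
    (hbot : H ≠ ⊥) (htop : H ≠ ⊤) :
    (∃ j, H = zpowers (sr j)) ∨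
    (∃ i, H = closure {r ((p : ℕ) : ZMod (p ^ 2)), sr i}) ∨
    H = zpowers (r (1 : ZMod (p ^ 2))) ∨ H = zpowers (r ((p : ℕ) : ZMod (p ^ 2))) := by
  haveI : NeZero (p ^ 2) := ⟨pow_ne_zero 2 hp.pos.ne'⟩
  set A := rotPart H with hA
  have hrmem : ∀ i, r i ∈ H ↔ i ∈ A := fun i => Iff.rfl
  rcases zmod_sq_classify p hp A with hAb | hAp | hAt
  · -- A = ⊥ : H has a reflection (else H = ⊥), and H = zpowers (sr j)
    by_cases hs : ∃ j, sr j ∈ H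
    · obtain ⟨j, hj⟩ := hs
      left; refine ⟨j, le_antisymm ?_ ((zpowers_le).mpr hj)⟩
      intro x hx
      cases x with
      | r i =>
          have : i ∈ A := hx
          rw [hAb] at this
          simp only [AddSubgroup.mem_bot] at this
          subst this
          exact one_mem _
      | sr i =>
          have : sr j * sr i ∈ H := H.mul_mem hj hx
          rw [sr_mul_sr] at this
          have hi : i - j ∈ A := this
          rw [hAb] at hi
          simp only [AddSubgroup.mem_bot, sub_eq_zero] at hi
          subst hi
          exact mem_zpowers _
    · exfalso; apply hbot
      rw [eq_bot_iff_forall]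
      intro x hx
      cases x with
      | r i =>
          have : i ∈ A := hx
          rw [hAb] at this
          simp only [AddSubgroup.mem_bot] at this
          rw [this, one_def]
      | sr i => exact absurd ⟨i, hx⟩ hs
  · -- A = zmultiples p
    have hrp : r ((p : ℕ) : ZMod (p ^ 2)) ∈ H := by
      rw [hrmem, hAp]; exact AddSubgroup.mem_zmultiples _
    have hrot : ∀ i : ZMod (p ^ 2), i ∈ A →
        ∀ K : Subgroup (DihedralGroup (p ^ 2)), r ((p : ℕ) : ZMod (p ^ 2)) ∈ K → r i ∈ K := by
      intro i hi K hK
      rw [hAp] at hi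
      obtain ⟨k, hk⟩ := hi
      have hk' : k • ((p : ℕ) : ZMod (p ^ 2)) = i := hk
      have := K.zpow_mem hK k
      rwa [my_r_zpow, hk'] at this
    by_cases hs : ∃ j, sr j ∈ H
    · obtain ⟨j, hj⟩ := hs
      right; left; refine ⟨j, le_antisymm ?_ ?_⟩
      · intro x hx
        cases x with
        | r i =>
            exact hrot i hx _ (subset_closure (by simp))
        | sr i =>
            have hmem : sr j * sr i ∈ H := H.mul_mem hj hx
            rw [sr_mul_sr] at hmem
            have hij : r (i - j) ∈ closure {r ((p : ℕ) : ZMod (p ^ 2)), sr j} :=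
              hrot (i - j) hmem _ (subset_closure (by simp))
            have hjc : sr j ∈ closure {r ((p : ℕ) : ZMod (p ^ 2)), sr j} :=
              subset_closure (by simp)
            have := mul_mem hjc hij
            rwa [sr_mul_r, add_sub_cancel] at this
      · rw [closure_le]
        rintro x (rfl | rfl)
        · exact hrp
        · exact hj
    · right; right; right
      apply le_antisymm
      · intro x hx
        cases x with
        | r i =>
            exact hrot i hx _ (mem_zpowers _)
        | sr i => exact absurd ⟨i, hx⟩ hs
      · rw [zpowers_le]; exact hrp
  · -- A = ⊤
    by_cases hs : ∃ j, sr j ∈ H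
    · exfalso; apply htop
      obtain ⟨j, hj⟩ := hs
      rw [eq_top_iff']
      intro x
      cases x with
      | r i => rw [hrmem, hAt]; trivial
      | sr i =>
          have hr : r (i - j) ∈ H := by rw [hrmem, hAt]; trivial
          have := H.mul_mem hj hr
          rwa [sr_mul_r, add_sub_cancel] at this
    · right; right; left
      apply le_antisymm
      · intro x hx
        cases x with
        | r i =>
            refine ⟨(i.val : ℤ), ?_⟩
            show (r 1 : DihedralGroup (p ^ 2)) ^ (i.val : ℤ) = r i
            rw [zpow_natCast, r_one_pow, ZMod.natCast_val, ZMod.cast_id]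
        | sr i => exact absurd ⟨i, hx⟩ hs
      · rw [zpowers_le, hrmem, hAt]; trivial

theorem stmt9 (p : ℕ) (hp : p.Prime)
    (I K : Set (Vert (p ^ 2)))
    (hI : I = {v | ∃ j : ZMod (p ^ 2), v.1 = Subgroup.zpowers (DihedralGroup.sr j)})
    (hK : K = {v | (∃ i : ZMod (p ^ 2), v.1 = Subgroup.closure
        {DihedralGroup.r ((p : ℕ) : ZMod (p ^ 2)), DihedralGroup.sr i}) ∨
      v.1 = Subgroup.zpowers (DihedralGroup.r (1 : ZMod (p ^ 2))) ∨
      v.1 = Subgroup.zpowers (DihedralGroup.r ((p : ℕ) : ZMod (p ^ 2)))}) :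
    I ∪ K = Set.univ ∧ I ∩ K = ∅ ∧
    (∀ u ∈ I, ∀ v ∈ I, ¬ (interGraph (DihedralGroup (p ^ 2))).Adj u v) ∧
    (∀ u ∈ K, ∀ v ∈ K, u ≠ v → (interGraph (DihedralGroup (p ^ 2))).Adj u v) := by
  have hrp_ne : (DihedralGroup.r ((p : ℕ) : ZMod (p ^ 2)) : DihedralGroup (p ^ 2)) ≠ 1 := by
    rw [one_def]
    intro h
    have h2 : ((p : ℕ) : ZMod (p ^ 2)) = 0 := by injection h
    have h3 : p ^ 2 ∣ p := (ZMod.natCast_eq_zero_iff _ _).mp h2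
    have := Nat.le_of_dvd hp.pos h3
    nlinarith [hp.two_le]
  -- every element of K contains r p
  have hKmem : ∀ v ∈ K, DihedralGroup.r ((p : ℕ) : ZMod (p ^ 2)) ∈ v.1 := by
    intro v hv
    rw [hK] at hv
    rcases hv with ⟨i, hi⟩ | hv | hv
    · rw [hi]; exact subset_closure (by simp)
    · rw [hv]
      refine ⟨(p : ℤ), ?_⟩
      show (DihedralGroup.r 1 : DihedralGroup (p ^ 2)) ^ ((p : ℕ) : ℤ) = _
      rw [zpow_natCast, r_one_pow]
    · rw [hv]; exact mem_zpowers _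
  refine ⟨?_, ?_, ?_, ?_⟩
  · -- union
    rw [Set.eq_univ_iff_forall]
    intro v
    rcases dihedral_classify p hp v.1 v.2.1 v.2.2 with ⟨j, hj⟩ | ⟨i, hi⟩ | h | h
    · left; rw [hI]; exact ⟨j, hj⟩
    · right; rw [hK]; exact Or.inl ⟨i, hi⟩
    · right; rw [hK]; exact Or.inr (Or.inl h)
    · right; rw [hK]; exact Or.inr (Or.inr h)
  · -- disjoint
    rw [Set.eq_empty_iff_forall_notMem]
    rintro v ⟨hvI, hvK⟩
    have h1 := hKmem v hvK
    rw [hI] at hvI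
    obtain ⟨j, hj⟩ := hvI
    rw [hj] at h1
    rcases mem_zpowers_sr.mp h1 with h | h
    · exact hrp_ne h
    · exact absurd h (by simp)
  · -- I independent
    intro u hu v hv hadj
    obtain ⟨hne, hinf⟩ : u ≠ v ∧ u.1 ⊓ v.1 ≠ ⊥ := hadj
    rw [hI] at hu hv
    obtain ⟨j, hj⟩ := hu
    obtain ⟨j', hj'⟩ := hv
    apply hinf
    rw [Subgroup.eq_bot_iff_forall]
    intro x hx
    rw [Subgroup.mem_inf, hj, hj'] at hx
    by_contra hx1
    rcases mem_zpowers_sr.mp hx.1 with h | h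
    · exact hx1 h
    · rcases mem_zpowers_sr.mp hx.2 with h' | h'
      · exact hx1 h'
      · apply hne
        have : j = j' := by rw [h] at h'; injection h'
        exact Subtype.ext (by rw [hj, hj', this])
  · -- K clique
    intro u hu v hv hne
    show u ≠ v ∧ u.1 ⊓ v.1 ≠ ⊥
    refine ⟨hne, ?_⟩
    intro hbot
    have : DihedralGroup.r ((p : ℕ) : ZMod (p ^ 2)) ∈ u.1 ⊓ v.1 :=
      Subgroup.mem_inf.mpr ⟨hKmem u hu, hKmem v hv⟩
    rw [hbot, Subgroup.mem_bot] at this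
    exact hrp_ne this
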